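/- If a graph G on vertex set {1,...,n} is properly colored with color classes V_1, ..., V_k, then every QTF f : {-1,1}^n → {-1,1} supported on G satisfies I[f] ≤ Σ_{j=1}^k E_x[ | Σ_{i ∈ V_j} x_i | ], where x is uniform on {-1,1}^n. -/
import Mathlib


open Finset
open scoped Classical

noncomputable section

/-- The Boolean cube `{-1,1}^V` as a finset of functions `V → ℤ`. -/
def cube (V : Type*) [Fintype V] [DecidableEq V] : Finset (V → ℤ) :=
  Fintype.piFinset fun _ => ({-1, 1} : Finset ℤ)

/-- Negate the `i`-th coordinate. -/
def flipAt {V : Type*} [DecidableEq V] (x : V → ℤ) (i : V) : V → ℤ :=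
  Function.update x i (-(x i))

/-- Influence of coordinate `i` on `f`: the probability over a uniform point of the cube
that flipping coordinate `i` changes the value of `f`. -/
def coordInf {V : Type*} [Fintype V] [DecidableEq V] {α : Type*} (f : (V → ℤ) → α) (i : V) : ℝ :=
  (∑ x ∈ cube V, if f x ≠ f (flipAt x i) then (1 : ℝ) else 0) / (cube V).card

/-- Total influence of `f`. -/
def totalInf {V : Type*} [Fintype V] [DecidableEq V] {α : Type*} (f : (V → ℤ) → α) : ℝ :=
  ∑ i : V, coordInf f i

/-- Sign function, with `sgn 0 = 0`. -/
def sgn (t : ℝ) : ℤ := if 0 < t then 1 else if t < 0 then -1 else 0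

/-- A quadratic multilinear polynomial `∑_{i<j} a_{ij} x_i x_j + ∑_i b_i x_i + c`. -/
def quadPoly {V : Type*} [Fintype V] [LinearOrder V] (a : V → V → ℝ) (b : V → ℝ) (c : ℝ)
    (x : V → ℤ) : ℝ :=
  (∑ i : V, ∑ j : V, if i < j then a i j * x i * x j else 0) + (∑ i : V, b i * x i) + c

/-- `f` is a QTF supported on the graph `G`: it has a quadratic representation whose
cross terms only involve edges of `G`, and whose polynomial is nonvanishing on the cube. -/
def IsQTFSupportedOn {V : Type*} [Fintype V] [LinearOrder V] (G : SimpleGraph V)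
    (f : (V → ℤ) → ℤ) : Prop :=
  ∃ a b c, (∀ i j : V, i < j → a i j ≠ 0 → G.Adj i j) ∧
    (∀ x ∈ cube V, quadPoly a b c x ≠ 0) ∧
    (∀ x ∈ cube V, f x = sgn (quadPoly a b c x))

section Aux

variable {V : Type*} [Fintype V] [DecidableEq V]

lemma mem_cube_iff {x : V → ℤ} : x ∈ cube V ↔ ∀ i, x i = -1 ∨ x i = 1 := by
  simp [cube, Fintype.mem_piFinset]

lemma cube_card_pos : 0 < (cube V).card :=
  Finset.card_pos.2 ⟨fun _ => 1, mem_cube_iff.2 fun _ => Or.inr rfl⟩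

lemma flipAt_mem_cube {x : V → ℤ} (hx : x ∈ cube V) (i : V) : flipAt x i ∈ cube V := by
  rw [mem_cube_iff] at hx ⊢
  intro j
  rcases eq_or_ne j i with h | h
  · subst h
    rcases hx j with h1 | h1 <;> simp [flipAt, h1]
  · simpa [flipAt, Function.update_apply, h] using hx j

lemma flipAt_apply_self (x : V → ℤ) (i : V) : flipAt x i i = -(x i) := by
  simp [flipAt]

lemma flipAt_apply_ne (x : V → ℤ) {i j : V} (h : j ≠ i) : flipAt x i j = x j := by
  simp [flipAt, Function.update_apply, h]

lemma flipAt_flipAt (x : V → ℤ) (i : V) : flipAt (flipAt x i) i = x := by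
  funext j
  rcases eq_or_ne j i with h | h
  · subst h; simp [flipAt]
  · simp [flipAt, Function.update_apply, h]

variable [LinearOrder V]

def qcoeff (a : V → V → ℝ) (i j : V) : ℝ :=
  if j < i then a j i else if i < j then a i j else 0

def linCoeff (a : V → V → ℝ) (b : V → ℝ) (i : V) (x : V → ℤ) : ℝ :=
  (∑ j : V, qcoeff a i j * x j) + b i

lemma linCoeff_congr {a : V → V → ℝ} {b : V → ℝ} (i : V) {x x' : V → ℤ}
    (h : ∀ j, x j ≠ x' j → qcoeff a i j = 0) :
    linCoeff a b i x = linCoeff a b i x' := by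
  unfold linCoeff
  congr 1
  apply Finset.sum_congr rfl
  intro j _
  by_cases hj : x j = x' j
  · rw [hj]
  · rw [h j hj]; ring

lemma linCoeff_flip {a : V → V → ℝ} {b : V → ℝ} (i : V) (x : V → ℤ) :
    linCoeff a b i (flipAt x i) = linCoeff a b i x := by
  apply linCoeff_congr
  intro j hj
  have : j = i := by
    by_contra hne
    exact hj (flipAt_apply_ne x hne)
  subst this
  simp [qcoeff]

lemma quad_sub_flip (a : V → V → ℝ) (b : V → ℝ) (c : ℝ) (x : V → ℤ) (i : V) :
    quadPoly a b c x - quadPoly a b c (flipAt x i) = 2 * (x i : ℝ) * linCoeff a b i x := by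
  have hx' : ∀ j : V, (((flipAt x i) j : ℤ) : ℝ) = (if j = i then -(x i : ℝ) else (x j : ℝ)) := by
    intro j
    rcases eq_or_ne j i with h | h
    · subst h; simp [flipAt]
    · simp [flipAt, Function.update_apply, h]
  have hterm : ∀ p q : V,
      (if p < q then a p q * (((flipAt x i) p : ℤ) : ℝ) * (((flipAt x i) q : ℤ) : ℝ) else 0)
        = (if p < q then a p q * (x p : ℝ) * (x q : ℝ) else 0)
          - (if p = i then (if p < q then 2 * a p q * (x p : ℝ) * (x q : ℝ) else 0) else 0)
          - (if q = i then (if p < q ∧ p ≠ i then 2 * a p q * (x p : ℝ) * (x q : ℝ) else 0) else 0) := by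
    intro p q
    rcases eq_or_ne p i with hp | hp <;> rcases eq_or_ne q i with hq | hq
    · rw [hx', hx']
      simp only [hp, hq, if_pos rfl]
      have : ¬ p < q := by rw [hp, hq]; exact lt_irrefl i
      simp [this]
    · rw [hx', hx']
      simp only [hp, hq, if_pos rfl, if_neg hq]
      by_cases h : p < q
      · have : ¬ (p < q ∧ p ≠ i) := by rw [hp]; tauto
        simp [h, this, hp]
        split_ifs <;> ring
      · simp [h]
        split_ifs <;> ring
    · subst hq
      rw [hx', hx']
      simp only [if_pos rfl, if_neg hp]
      by_cases h : p < q
      · simp [h, hp]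
        ring
      · simp [h, hp]
    · rw [hx', hx']
      simp [hp, hq]
  -- now expand
  unfold quadPoly
  have expand : (∑ p : V, ∑ q : V, if p < q then a p q * (((flipAt x i) p : ℤ) : ℝ) * (((flipAt x i) q : ℤ) : ℝ) else 0)
      = (∑ p : V, ∑ q : V, if p < q then a p q * (x p : ℝ) * (x q : ℝ) else 0)
        - (∑ q : V, if i < q then 2 * a i q * (x i : ℝ) * (x q : ℝ) else 0)
        - (∑ p : V, if p < i ∧ p ≠ i then 2 * a p i * (x p : ℝ) * (x i : ℝ) else 0) := by
    rw [Finset.sum_congr rfl (fun p _ => Finset.sum_congr rfl (fun q _ => hterm p q))]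
    simp only [Finset.sum_sub_distrib]
    congr 1
    · congr 1
      have h1 : ∀ p : V, (∑ q : V, (if p = i then (if p < q then 2 * a p q * (x p : ℝ) * (x q : ℝ) else 0) else 0))
          = if p = i then (∑ q : V, if p < q then 2 * a p q * (x p : ℝ) * (x q : ℝ) else 0) else 0 := by
        intro p; split_ifs <;> simp
      rw [Finset.sum_congr rfl fun p _ => h1 p]
      rw [Finset.sum_ite_eq' Finset.univ i
        (fun p => ∑ q : V, if p < q then 2 * a p q * (x p : ℝ) * (x q : ℝ) else 0)]
      simp
    · apply Finset.sum_congr rfl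
      intro p _
      rw [Finset.sum_ite_eq' Finset.univ i
        (fun q => if p < q ∧ p ≠ i then 2 * a p q * (x p : ℝ) * (x q : ℝ) else 0)]
      simp
  have hlin : (∑ p : V, b p * (((flipAt x i) p : ℤ) : ℝ))
      = (∑ p : V, b p * (x p : ℝ)) - 2 * b i * (x i : ℝ) := by
    have h1 : ∀ p : V, b p * (((flipAt x i) p : ℤ) : ℝ)
        = b p * (x p : ℝ) - (if p = i then 2 * b i * (x i : ℝ) else 0) := by
      intro p
      rw [hx']
      rcases eq_or_ne p i with h | h
      · subst h; simp; ring
      · simp [h]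
    rw [Finset.sum_congr rfl fun p _ => h1 p, Finset.sum_sub_distrib,
      Finset.sum_ite_eq' Finset.univ i (fun _ => 2 * b i * (x i : ℝ))]
    simp
  rw [expand, hlin]
  unfold linCoeff
  rw [mul_add, Finset.mul_sum]
  have hsplit : ∀ j : V, 2 * (x i : ℝ) * (qcoeff a i j * (x j : ℝ))
      = (if i < j then 2 * a i j * (x i : ℝ) * (x j : ℝ) else 0)
        + (if j < i ∧ j ≠ i then 2 * a j i * (x j : ℝ) * (x i : ℝ) else 0) := by
    intro j
    unfold qcoeff
    rcases lt_trichotomy j i with h | h | h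
    · simp [h, not_lt.2 h.le, ne_of_lt h]
      ring
    · simp [h]
    · simp [h, not_lt.2 h.le, ne_of_gt h, asymm h]
      ring
  rw [Finset.sum_congr rfl fun j _ => hsplit j, Finset.sum_add_distrib]
  ring

def epsZ (a : V → V → ℝ) (b : V → ℝ) (i : V) (x : V → ℤ) : ℤ :=
  if 0 ≤ linCoeff a b i x then 1 else -1

lemma epsZ_flip (a : V → V → ℝ) (b : V → ℝ) (i : V) (x : V → ℤ) :
    epsZ a b i (flipAt x i) = epsZ a b i x := by
  unfold epsZ
  rw [linCoeff_flip]

lemma epsZ_sq (a : V → V → ℝ) (b : V → ℝ) (i : V) (x : V → ℤ) :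
    epsZ a b i x * epsZ a b i x = 1 := by
  unfold epsZ; split_ifs <;> norm_num

lemma sgn_of_pos {t : ℝ} (h : 0 < t) : sgn t = 1 := if_pos h

lemma sgn_of_neg {t : ℝ} (h : t < 0) : sgn t = -1 := by
  unfold sgn
  rw [if_neg (not_lt.2 h.le), if_pos h]

lemma indicator_eq {a : V → V → ℝ} {b : V → ℝ} {c : ℝ} {f : (V → ℤ) → ℤ}
    (hnz : ∀ y ∈ cube V, quadPoly a b c y ≠ 0)
    (hfe : ∀ y ∈ cube V, f y = sgn (quadPoly a b c y)) (i : V) :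
    ∀ x ∈ cube V, ∀ (D : Decidable (f x ≠ f (flipAt x i))), (@ite _ _ D (1 : ℝ) 0)
      = (epsZ a b i x : ℝ) * (x i : ℝ) * ((f x : ℝ) - (f (flipAt x i) : ℝ)) / 2 := by
  intro x hx D
  by_cases hne : f x = f (flipAt x i)
  · simp [hne]
  · rw [if_pos hne]
    have hx' := flipAt_mem_cube hx i
    have hu := hfe x hx
    have hv := hfe _ hx'
    have hpu := hnz x hx
    have hpv := hnz _ hx'
    have hdiff := quad_sub_flip a b c x i
    have hxi : x i = -1 ∨ x i = 1 := mem_cube_iff.1 hx i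
    rcases hpu.lt_or_gt with hu0 | hu0 <;> rcases hpv.lt_or_gt with hv0 | hv0
    · exact absurd (by rw [hu, hv, sgn_of_neg hu0, sgn_of_neg hv0]) hne
    · -- u < 0 < v, so 2 * x i * l < 0
      rw [hu, hv, sgn_of_neg hu0, sgn_of_pos hv0]
      have h2 : 2 * (x i : ℝ) * linCoeff a b i x < 0 := by rw [← hdiff]; linarith
      rcases hxi with hxi | hxi
      · have hl0 : 0 < linCoeff a b i x := by rw [hxi] at h2; push_cast at h2; linarith
        simp [epsZ, hl0.le, hxi]
      · have hl0 : linCoeff a b i x < 0 := by rw [hxi] at h2; push_cast at h2; linarith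
        simp [epsZ, not_le.2 hl0, hxi]
    · -- v < 0 < u, so 2 * x i * l > 0
      rw [hu, hv, sgn_of_pos hu0, sgn_of_neg hv0]
      have h2 : 0 < 2 * (x i : ℝ) * linCoeff a b i x := by rw [← hdiff]; linarith
      rcases hxi with hxi | hxi
      · have hl0 : linCoeff a b i x < 0 := by rw [hxi] at h2; push_cast at h2; linarith
        simp [epsZ, not_le.2 hl0, hxi]
      · have hl0 : 0 < linCoeff a b i x := by rw [hxi] at h2; push_cast at h2; linarith
        simp [epsZ, hl0.le, hxi]
    · exact absurd (by rw [hu, hv, sgn_of_pos hu0, sgn_of_pos hv0]) hne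

end Aux

/-- If `G` is properly colored with color classes `C 1, …, C k` (a partition of the
vertices into independent sets), then every QTF supported on `G` satisfies
`I[f] ≤ Σ_j E_x[ |Σ_{i ∈ C j} x_i| ]`. -/
theorem qtf_influence_le_sum_colorClass {n k : ℕ} (G : SimpleGraph (Fin n))
    (C : Fin k → Finset (Fin n))
    (hcover : ∀ v : Fin n, ∃ j, v ∈ C j)
    (hdisj : ∀ j j' : Fin k, j ≠ j' → Disjoint (C j) (C j'))
    (hindep : ∀ j : Fin k, ∀ i ∈ C j, ∀ i' ∈ C j, ¬G.Adj i i')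
    (f : (Fin n → ℤ) → ℤ) (hf : IsQTFSupportedOn G f) :
    totalInf f ≤
      ∑ j : Fin k, (∑ x ∈ cube (Fin n), |∑ i ∈ C j, (x i : ℝ)|) / (cube (Fin n)).card := by
  classical
  obtain ⟨a, b, c, hsupp, hnz, hfe⟩ := hf
  have memiff : ∀ (D1 D2 : DecidableEq (Fin n)) (x : Fin n → ℤ),
      x ∈ @cube (Fin n) (Fin.fintype n) D1 → x ∈ @cube (Fin n) (Fin.fintype n) D2 := by
    intro D1 D2 x
    rw [Subsingleton.elim D1 D2]
    exact id
  replace hnz : ∀ x ∈ cube (Fin n), quadPoly a b c x ≠ 0 :=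
    fun x hx => hnz x (memiff _ _ x hx)
  replace hfe : ∀ x ∈ cube (Fin n), f x = sgn (quadPoly a b c x) :=
    fun x hx => hfe x (memiff _ _ x hx)
  have hNpos : (0 : ℝ) < ((cube (Fin n)).card : ℝ) := by exact_mod_cast cube_card_pos
  have hA : totalInf f = ∑ j : Fin k, ∑ i ∈ C j, coordInf f i := by
    unfold totalInf
    have hU : (Finset.univ : Finset (Fin n)) = (Finset.univ : Finset (Fin k)).biUnion C := by
      ext v
      simp only [Finset.mem_univ, Finset.mem_biUnion, true_iff]
      obtain ⟨j, hj⟩ := hcover v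
      exact ⟨j, trivial, hj⟩
    rw [hU, Finset.sum_biUnion]
    intro j _ j' _ hjj'
    exact hdisj j j' hjj'
  rw [hA]
  apply Finset.sum_le_sum
  intro j _
  set S := C j with hSdef
  -- coefficients vanish inside S
  have hzero : ∀ i ∈ S, ∀ i' ∈ S, i' ≠ i → qcoeff a i i' = 0 := by
    intro i hi i' hi' hne
    unfold qcoeff
    rcases lt_trichotomy i' i with h | h | h
    · rw [if_pos h]
      by_contra ha
      exact hindep j i' hi' i hi (hsupp i' i h ha)
    · exact absurd h hne
    · rw [if_neg (not_lt.2 h.le), if_pos h]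
      by_contra ha
      exact hindep j i hi i' hi' (hsupp i i' h ha)
  have hεinv : ∀ i ∈ S, ∀ x x' : Fin n → ℤ, (∀ j', j' ∉ S → x j' = x' j') →
      epsZ a b i x = epsZ a b i x' := by
    intro i hi x x' hagree
    unfold epsZ
    rw [linCoeff_congr (b := b) i (fun j' hj' => ?_)]
    by_cases hjS : j' ∈ S
    · rcases eq_or_ne j' i with rfl | hne
      · simp [qcoeff]
      · exact hzero i hi j' hjS hne
    · exact absurd (hagree j' hjS) hj'
  -- per-coordinate sum identity
  have hptw : ∀ i ∈ S, coordInf f i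
      = (∑ x ∈ cube (Fin n), (epsZ a b i x : ℝ) * (x i : ℝ) * (f x : ℝ))
          / ((cube (Fin n)).card : ℝ) := by
    intro i _
    unfold coordInf
    congr 1
    rw [show (∑ x ∈ cube (Fin n),
          @ite _ (f x ≠ f (flipAt x i)) (@instDecidableNot _ (Classical.propDecidable _)) (1 : ℝ) 0)
        = ∑ x ∈ cube (Fin n),
            (epsZ a b i x : ℝ) * (x i : ℝ) * ((f x : ℝ) - (f (flipAt x i) : ℝ)) / 2 from
      Finset.sum_congr rfl (fun x hx => indicator_eq hnz hfe i x hx _)]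
    have h2 : ∀ x : Fin n → ℤ,
        (epsZ a b i x : ℝ) * (x i : ℝ) * ((f x : ℝ) - (f (flipAt x i) : ℝ)) / 2
          = ((epsZ a b i x : ℝ) * (x i : ℝ) * (f x : ℝ)) / 2
            - ((epsZ a b i x : ℝ) * (x i : ℝ) * (f (flipAt x i) : ℝ)) / 2 := by
      intro x; ring
    rw [Finset.sum_congr rfl (fun x _ => h2 x), Finset.sum_sub_distrib]
    have h3 : (∑ x ∈ cube (Fin n), ((epsZ a b i x : ℝ) * (x i : ℝ) * (f (flipAt x i) : ℝ)) / 2)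
        = ∑ x ∈ cube (Fin n), -(((epsZ a b i x : ℝ) * (x i : ℝ) * (f x : ℝ)) / 2) := by
      apply Finset.sum_nbij' (fun x => flipAt x i) (fun x => flipAt x i)
        (fun x hx => flipAt_mem_cube hx i) (fun x hx => flipAt_mem_cube hx i)
        (fun x _ => flipAt_flipAt x i) (fun x _ => flipAt_flipAt x i)
      intro x _
      rw [epsZ_flip, flipAt_apply_self]
      push_cast
      ring
    rw [h3, Finset.sum_neg_distrib, sub_neg_eq_add, ← Finset.sum_add_distrib]
    apply Finset.sum_congr rfl
    intro x _
    ring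
  have key : (∑ i ∈ S, coordInf f i)
      = (∑ x ∈ cube (Fin n), (f x : ℝ) * ∑ i ∈ S, (epsZ a b i x : ℝ) * (x i : ℝ))
          / ((cube (Fin n)).card : ℝ) := by
    rw [Finset.sum_congr rfl hptw, ← Finset.sum_div]
    congr 1
    rw [Finset.sum_comm]
    apply Finset.sum_congr rfl
    intro x _
    rw [Finset.mul_sum]
    apply Finset.sum_congr rfl
    intro i _
    ring
  rw [key, div_le_div_iff_of_pos_right hNpos]
  -- numerator bound
  have habs : ∀ x ∈ cube (Fin n), |(f x : ℝ)| = 1 := by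
    intro x hx
    have := hnz x hx
    rcases this.lt_or_gt with h | h
    · rw [hfe x hx, sgn_of_neg h]; norm_num
    · rw [hfe x hx, sgn_of_pos h]; norm_num
  calc (∑ x ∈ cube (Fin n), (f x : ℝ) * ∑ i ∈ S, (epsZ a b i x : ℝ) * (x i : ℝ))
      ≤ ∑ x ∈ cube (Fin n), |∑ i ∈ S, (epsZ a b i x : ℝ) * (x i : ℝ)| := by
        apply Finset.sum_le_sum
        intro x hx
        calc (f x : ℝ) * ∑ i ∈ S, (epsZ a b i x : ℝ) * (x i : ℝ)
            ≤ |(f x : ℝ) * ∑ i ∈ S, (epsZ a b i x : ℝ) * (x i : ℝ)| := le_abs_self _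
          _ = |∑ i ∈ S, (epsZ a b i x : ℝ) * (x i : ℝ)| := by
              rw [abs_mul, habs x hx, one_mul]
    _ = ∑ x ∈ cube (Fin n), |∑ i ∈ S, (x i : ℝ)| := by
        set Φ : (Fin n → ℤ) → (Fin n → ℤ) :=
          fun x i' => if i' ∈ S then epsZ a b i' x * x i' else x i' with hΦ
        have hΦmem : ∀ x ∈ cube (Fin n), Φ x ∈ cube (Fin n) := by
          intro x hx
          rw [mem_cube_iff] at hx ⊢
          intro i'
          simp only [hΦ]
          by_cases hi' : i' ∈ S
          · rw [if_pos hi']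
            rcases hx i' with h | h <;> unfold epsZ <;> split_ifs <;> simp [h]
          · rw [if_neg hi']
            exact hx i'
        have hΦagree : ∀ x : Fin n → ℤ, ∀ j', j' ∉ S → Φ x j' = x j' := by
          intro x j' hj'
          simp only [hΦ, if_neg hj']
        have hΦinv : ∀ x ∈ cube (Fin n), Φ (Φ x) = x := by
          intro x _
          funext i'
          by_cases hi' : i' ∈ S
          · simp only [hΦ, if_pos hi']
            rw [hεinv i' hi' (fun i'' => if i'' ∈ S then epsZ a b i'' x * x i'' else x i'') x
              (fun j' hj' => by simp [hj'])]
            rw [← mul_assoc, epsZ_sq, one_mul]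
          · simp only [hΦ, if_neg hi']
        apply Finset.sum_nbij' Φ Φ hΦmem hΦmem hΦinv hΦinv
        intro x hx
        congr 1
        apply Finset.sum_congr rfl
        intro i hi
        simp only [hΦ, if_pos hi]
        push_cast
        ring
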